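/- arXiv:math/0611071 — 7 statements merged into one kernel-verified Lean document; each statement's English description precedes it below -/
import Mathlib

section
/- Let (Ω, μ) be a measure space with μ(Ω) < ∞. Let α : ℝ → ℝ be monotone (nondecreasing), let σ > 0 and S₋ ≤ 0 ≤ S₊, and assume α(r) − α(S₊) ≥ 2σ(r − S₊) for every r ≥ S₊ and α(S₋) − α(r) ≥ 2σ(S₋ − r) for every r ≤ S₋. Then there exists c ≥ 0, depending only on σ, S₋, S₊, α(S₋), α(S₊) and μ(Ω), such that for every measurable square-integrable function v : Ω → ℝ for which x ↦ α(v(x))·v(x) is integrable, one has ∫_Ω α(v(x))·v(x) dμ ≥ σ·∫_Ω v(x)² dμ − c. -/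
/-!
Pointwise, `α r · r ≥ σ r² - K` for a constant `K`: beyond `S₊` (and below `S₋`) the growth
condition gives `α r · r ≥ 2σ r² + b r`, and completing the square spends half of `2σ r²` on the
linear term; on the bounded interval in between, monotonicity bounds `α`. Integrating this over
the finite measure space gives the claim with `c = K μ(Ω)`.
-/

open MeasureTheory Set

lemma sq_sub_le_mul_of_nonneg_mul {σ : ℝ} (hσ : 0 < σ) {y r b : ℝ}
    (h : 0 ≤ (y - (2 * σ * r + b)) * r) : σ * r ^ 2 - b ^ 2 / (4 * σ) ≤ y * r := by
  have hsq : σ * r ^ 2 + b * r + b ^ 2 / (4 * σ) = σ * (r + b / (2 * σ)) ^ 2 := by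
    field_simp
    ring
  have : 0 ≤ σ * (r + b / (2 * σ)) ^ 2 := by positivity
  nlinarith

lemma Monotone.exists_sq_sub_le_mul_of_mem_Icc {α : ℝ → ℝ} (hα : Monotone α) (σ a b : ℝ) :
    ∃ C, ∀ r ∈ Icc a b, σ * r ^ 2 - C ≤ α r * r := by
  set R := max |a| |b|
  set M := max |α a| |α b|
  refine ⟨|σ| * R ^ 2 + M * R, fun r hr => ?_⟩
  have hrR : |r| ≤ R := abs_le_max_abs_abs hr.1 hr.2
  have hαM : |α r| ≤ M := abs_le_max_abs_abs (hα hr.1) (hα hr.2)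
  have hquad : σ * r ^ 2 ≤ |σ| * R ^ 2 :=
    calc σ * r ^ 2 ≤ |σ| * |r| ^ 2 := by rw [sq_abs]; gcongr; exact le_abs_self σ
      _ ≤ |σ| * R ^ 2 := by gcongr
  have hprod : -(M * R) ≤ α r * r := by
    have : |α r * r| ≤ M * R := by
      rw [abs_mul]
      exact mul_le_mul hαM hrR (abs_nonneg _) ((abs_nonneg _).trans hαM)
    linarith [neg_abs_le (α r * r)]
  linarith

lemma Monotone.exists_sq_sub_le_mul {α : ℝ → ℝ} (hα : Monotone α) {σ Sm Sp : ℝ} (hσ : 0 < σ)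
    (hup : ∀ r : ℝ, Sp ≤ r → α r - α Sp ≥ 2 * σ * (r - Sp))
    (hdown : ∀ r : ℝ, r ≤ Sm → α Sm - α r ≥ 2 * σ * (Sm - r)) :
    ∃ K, ∀ r, σ * r ^ 2 - K ≤ α r * r := by
  obtain ⟨C, hC⟩ := hα.exists_sq_sub_le_mul_of_mem_Icc σ (min Sm 0) (max Sp 0)
  set Kp := (α Sp - 2 * σ * Sp) ^ 2 / (4 * σ)
  set Km := (α Sm - 2 * σ * Sm) ^ 2 / (4 * σ)
  refine ⟨max C (max Kp Km), fun r => ?_⟩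
  have hC_le : C ≤ max C (max Kp Km) := le_max_left _ _
  have hKp_le : Kp ≤ max C (max Kp Km) := (le_max_left _ _).trans (le_max_right _ _)
  have hKm_le : Km ≤ max C (max Kp Km) := (le_max_right _ _).trans (le_max_right _ _)
  rcases le_or_gt (max Sp 0) r with hr | hr
  · obtain ⟨hSp, hr0⟩ := max_le_iff.1 hr
    have := sq_sub_le_mul_of_nonneg_mul hσ (y := α r) (b := α Sp - 2 * σ * Sp)
      (mul_nonneg (by linarith [hup r hSp]) hr0)
    linarith
  rcases le_or_gt r (min Sm 0) with hr' | hr'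
  · obtain ⟨hSm, hr0⟩ := le_min_iff.1 hr'
    have := sq_sub_le_mul_of_nonneg_mul hσ (y := α r) (b := α Sm - 2 * σ * Sm)
      (mul_nonneg_of_nonpos_of_nonpos (by linarith [hdown r hSm]) hr0)
    linarith
  · linarith [hC r ⟨hr'.le, hr.le⟩]

lemma integral_sq_sub_le_of_ae_le {Ω : Type*} [MeasurableSpace Ω] {μ : Measure Ω}
    [IsFiniteMeasure μ] {v g : Ω → ℝ} {σ K : ℝ} (hv : MemLp v 2 μ) (hg : Integrable g μ)
    (h : ∀ᵐ x ∂μ, σ * v x ^ 2 - K ≤ g x) :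
    σ * ∫ x, v x ^ 2 ∂μ - K * μ.real univ ≤ ∫ x, g x ∂μ := by
  have hv2 : Integrable (fun x => σ * v x ^ 2) μ := hv.integrable_sq.const_mul σ
  calc σ * ∫ x, v x ^ 2 ∂μ - K * μ.real univ = ∫ x, (σ * v x ^ 2 - K) ∂μ := by
        rw [integral_sub hv2 (integrable_const K), integral_const_mul, integral_const,
          smul_eq_mul, mul_comm K]
    _ ≤ ∫ x, g x ∂μ := integral_mono_ae (hv2.sub (integrable_const K)) hg h

theorem stmt_1_general {Ω : Type*} [MeasurableSpace Ω] (μ : Measure Ω) [IsFiniteMeasure μ]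
    (α : ℝ → ℝ) (hα : Monotone α) (σ Sm Sp : ℝ)
    (hσ : 0 < σ)
    (hup : ∀ r : ℝ, Sp ≤ r → α r - α Sp ≥ 2 * σ * (r - Sp))
    (hdown : ∀ r : ℝ, r ≤ Sm → α Sm - α r ≥ 2 * σ * (Sm - r)) :
    ∃ c : ℝ, 0 ≤ c ∧ ∀ v : Ω → ℝ, Measurable v → MemLp v 2 μ →
      Integrable (fun x => α (v x) * v x) μ →
      ∫ x, α (v x) * v x ∂μ ≥ σ * ∫ x, (v x) ^ 2 ∂μ - c := by
  obtain ⟨K, hK⟩ := hα.exists_sq_sub_le_mul hσ hup hdown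
  have hK0 : 0 ≤ K := by simpa using hK 0
  exact ⟨K * μ.real univ, mul_nonneg hK0 measureReal_nonneg, fun v _ hv hint =>
    integral_sq_sub_le_of_ae_le hv hint (ae_of_all _ fun x => hK (v x))⟩

/-- Inequality (2.10) of the paper: the L²-coercivity of the superposition
operator induced by a monotone real function whose increments grow at rate at
least `2σ` outside the bounded interval `[S₋, S₊]`, on a finite measure space. -/
theorem stmt_1 {Ω : Type*} [MeasurableSpace Ω] (μ : Measure Ω) [IsFiniteMeasure μ]
    (α : ℝ → ℝ) (hα : Monotone α) (σ Sm Sp : ℝ)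
    (hσ : 0 < σ) (hSm : Sm ≤ 0) (hSp : 0 ≤ Sp)
    (hup : ∀ r : ℝ, Sp ≤ r → α r - α Sp ≥ 2 * σ * (r - Sp))
    (hdown : ∀ r : ℝ, r ≤ Sm → α Sm - α r ≥ 2 * σ * (Sm - r)) :
    ∃ c : ℝ, 0 ≤ c ∧ ∀ v : Ω → ℝ, Measurable v → MemLp v 2 μ →
      Integrable (fun x => α (v x) * v x) μ →
      ∫ x, α (v x) * v x ∂μ ≥ σ * ∫ x, (v x) ^ 2 ∂μ - c :=
  stmt_1_general μ α hα σ Sm Sp hσ hup hdown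
end

section
/- Let α : ℝ → ℝ be monotone (nondecreasing), σ > 0, S₋ ≤ 0 ≤ S₊, and assume the increment bounds α(r) − α(s) ≥ 2σ(r − s) whenever S₊ ≤ s ≤ r and whenever s ≤ r ≤ S₋. Let ν > 0 satisfy ν·α(S₊) ≤ S₊ and ν·α(S₋) ≥ S₋, and let j : ℝ → ℝ be a resolvent of α at parameter ν, with associated Yosida approximation α_ν. Then for all s ≤ r with either 2S₊ ≤ s or r ≤ 2S₋, one has α_ν(r) − α_ν(s) ≥ (2σ/(1 + 2νσ))·(r − s). In particular, if moreover 2νσ ≤ 1, then α_ν(r) − α_ν(s) ≥ σ·(r − s) on these ranges. -/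
/-!
The Yosida approximation is `α ∘ j`, and increments satisfy
`r - s = (j r - j s) + ν (α (j r) - α (j s))`. The smallness conditions keep `j` on the same side of `S₊` (resp. `S₋`) as the enlarged range
`[2S₊, ∞)` (resp. `(-∞, 2S₋]`), so the increment bound of `α` applies at `j s ≤ j r`; it turns
the identity above into `r - s ≤ (1/(2σ) + ν) (α (j r) - α (j s))`.
-/

def IsResolvent (α : ℝ → ℝ) (ν : ℝ) (j : ℝ → ℝ) : Prop :=
  ∀ r, j r + ν * α (j r) = r

namespace IsResolvent

variable {α j : ℝ → ℝ} {ν : ℝ}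

theorem yosida_eq (hj : IsResolvent α ν j) (hν : ν ≠ 0) (r : ℝ) :
    (r - j r) / ν = α (j r) := by
  rw [div_eq_iff hν]
  linear_combination -hj r

theorem monotone (hj : IsResolvent α ν j) (hα : Monotone α) (hν : 0 ≤ ν) : Monotone j := by
  intro s r hsr
  by_contra! hlt
  have hαle : ν * α (j r) ≤ ν * α (j s) := mul_le_mul_of_nonneg_left (hα hlt.le) hν
  have := hj r
  have := hj s
  linarith

theorem le_apply_of_two_mul_le (hj : IsResolvent α ν j) (hα : Monotone α) (hν : 0 ≤ ν)
    {S s : ℝ} (hsmall : ν * α S ≤ S) (hs : 2 * S ≤ s) : S ≤ j s := by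
  by_contra! hlt
  have hαle : ν * α (j s) ≤ ν * α S := mul_le_mul_of_nonneg_left (hα hlt.le) hν
  have := hj s
  linarith

theorem apply_le_of_le_two_mul (hj : IsResolvent α ν j) (hα : Monotone α) (hν : 0 ≤ ν)
    {S r : ℝ} (hsmall : S ≤ ν * α S) (hr : r ≤ 2 * S) : j r ≤ S := by
  by_contra! hlt
  have hαle : ν * α S ≤ ν * α (j r) := mul_le_mul_of_nonneg_left (hα hlt.le) hν
  have := hj r
  linarith

end IsResolvent

theorem div_one_add_mul_mul_add_le {σ ν d a : ℝ} (hpos : 0 < 1 + 2 * ν * σ)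
    (had : 2 * σ * d ≤ a) : 2 * σ / (1 + 2 * ν * σ) * (d + ν * a) ≤ a := by
  rw [div_mul_eq_mul_div, div_le_iff₀ hpos]
  linarith

theorem le_two_mul_div_one_add_mul {σ ν : ℝ} (hσ : 0 < σ) (hν : 0 ≤ ν) (h : 2 * ν * σ ≤ 1) :
    σ ≤ 2 * σ / (1 + 2 * ν * σ) := by
  rw [le_div_iff₀ (by positivity)]
  nlinarith

theorem stmt_2_general (α j : ℝ → ℝ) (hα : Monotone α) (σ Sm Sp ν : ℝ)
    (hσ : 0 < σ) (hν : 0 < ν)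
    (hincup : ∀ s r : ℝ, Sp ≤ s → s ≤ r → α r - α s ≥ 2 * σ * (r - s))
    (hincdown : ∀ s r : ℝ, s ≤ r → r ≤ Sm → α r - α s ≥ 2 * σ * (r - s))
    (hsmallp : ν * α Sp ≤ Sp) (hsmallm : Sm ≤ ν * α Sm)
    (hres : ∀ r : ℝ, j r + ν * α (j r) = r) :
    ∀ s r : ℝ, s ≤ r → (2 * Sp ≤ s ∨ r ≤ 2 * Sm) →
      ((r - j r) / ν - (s - j s) / ν ≥ 2 * σ / (1 + 2 * ν * σ) * (r - s)) ∧
      (2 * ν * σ ≤ 1 → (r - j r) / ν - (s - j s) / ν ≥ σ * (r - s)) := by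
  intro s r hsr hcase
  have hj : IsResolvent α ν j := hres
  have hjsr : j s ≤ j r := hj.monotone hα hν.le hsr
  have hinc : 2 * σ * (j r - j s) ≤ α (j r) - α (j s) := by
    rcases hcase with hs | hr
    · exact hincup _ _ (hj.le_apply_of_two_mul_le hα hν.le hsmallp hs) hjsr
    · exact hincdown _ _ hjsr (hj.apply_le_of_le_two_mul hα hν.le hsmallm hr)
  have hincr : r - s = (j r - j s) + ν * (α (j r) - α (j s)) := by
    linear_combination hj s - hj r
  have hmain : 2 * σ / (1 + 2 * ν * σ) * (r - s) ≤ α (j r) - α (j s) :=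
    hincr ▸ div_one_add_mul_mul_add_le (ν := ν) (by positivity) hinc
  rw [hj.yosida_eq hν.ne', hj.yosida_eq hν.ne']
  refine ⟨hmain, fun hsmall => le_trans ?_ hmain⟩
  exact mul_le_mul_of_nonneg_right (le_two_mul_div_one_add_mul hσ hν.le hsmall) (sub_nonneg.2 hsr)

/-- Lemma 3.1 of the paper (incremental, single-valued form): the Yosida
approximation `α_ν(r) = (r - j(r))/ν` of a monotone function `α`, built from a
resolvent `j` (i.e. `j r + ν * α (j r) = r`), inherits the strong monotonicity
of `α` outside the enlarged interval `[2S₋, 2S₊]`, provided the smallness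
conditions `ν·α(S₊) ≤ S₊` and `ν·α(S₋) ≥ S₋` hold. -/
theorem stmt_2 (α j : ℝ → ℝ) (hα : Monotone α) (σ Sm Sp ν : ℝ)
    (hσ : 0 < σ) (hν : 0 < ν) (hSm : Sm ≤ 0) (hSp : 0 ≤ Sp)
    (hincup : ∀ s r : ℝ, Sp ≤ s → s ≤ r → α r - α s ≥ 2 * σ * (r - s))
    (hincdown : ∀ s r : ℝ, s ≤ r → r ≤ Sm → α r - α s ≥ 2 * σ * (r - s))
    (hsmallp : ν * α Sp ≤ Sp) (hsmallm : Sm ≤ ν * α Sm)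
    (hres : ∀ r : ℝ, j r + ν * α (j r) = r) :
    ∀ s r : ℝ, s ≤ r → (2 * Sp ≤ s ∨ r ≤ 2 * Sm) →
      ((r - j r) / ν - (s - j s) / ν ≥ 2 * σ / (1 + 2 * ν * σ) * (r - s)) ∧
      (2 * ν * σ ≤ 1 → (r - j r) / ν - (s - j s) / ν ≥ σ * (r - s)) :=
  stmt_2_general α j hα σ Sm Sp ν hσ hν hincup hincdown hsmallp hsmallm hres
end

section
/- Let β : ℝ → ℝ be monotone (nondecreasing) with β(0) = 0, let η > 0 and R ≥ 0, and assume β(r)·r ≥ η·r² for all r with |r| ≥ R. Let ε > 0 satisfy ε ≤ 1 and ε·η ≤ 1, and let j : ℝ → ℝ be a resolvent of β at parameter ε, with associated Yosida approximation β_ε. Then β_ε(r)·r ≥ (η/2)·r² for every r with |r| ≥ R + |β(R)| + |β(−R)|. -/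
/-!
Write `x = j r`, so that `r = x + ε β(x)` and `β_ε(r) = β(x)`. On `[-R, R]` a monotone `β` lies
between `β(-R)` and `β(R)`, so `|r|` above the enlarged threshold forces `|x| ≥ R`, where
`β(x) x ≥ η x²` holds; this coercivity survives the shift from `x` to `x + ε β(x)` with half the
constant as long as `ε η ≤ 1`.
-/

lemma le_abs_of_le_abs_add_mul {β : ℝ → ℝ} (hβ : Monotone β) {ε R x : ℝ} (hε : 0 ≤ ε)
    (hε1 : ε ≤ 1) (h : R + |β R| + |β (-R)| ≤ |x + ε * β x|) : R ≤ |x| := by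
  have hεβ (t : ℝ) : |ε * β t| ≤ |β t| := by
    rw [abs_mul, abs_of_nonneg hε]
    exact mul_le_of_le_one_left (abs_nonneg _) hε1
  by_contra! hx
  obtain ⟨hxl, hxr⟩ := abs_lt.mp hx
  have hup : x + ε * β x < R + |β R| := by
    linarith [mul_le_mul_of_nonneg_left (hβ hxr.le) hε, (abs_le.mp (hεβ R)).2]
  have hlow : -(R + |β (-R)|) < x + ε * β x := by
    linarith [mul_le_mul_of_nonneg_left (hβ hxl.le) hε, (abs_le.mp (hεβ (-R))).1]
  have : |x + ε * β x| < R + |β R| + |β (-R)| :=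
    abs_lt.mpr ⟨by linarith [abs_nonneg (β R)], by linarith [abs_nonneg (β (-R))]⟩
  exact this.not_ge h

/-- `b (x + ε b) - (η/2)(x + ε b)² = (b x - η x²) + (η/2)(x - ε b)² + ε (1 - ε η) b²`. -/
lemma half_coercive_add_mul {η ε x b : ℝ} (hη : 0 ≤ η) (hε : 0 ≤ ε) (hεη : ε * η ≤ 1)
    (h : b * x ≥ η * x ^ 2) : b * (x + ε * b) ≥ η / 2 * (x + ε * b) ^ 2 := by
  linarith [mul_nonneg hη (sq_nonneg (x - ε * b)),
    mul_nonneg (mul_nonneg hε (sub_nonneg.mpr hεη)) (sq_nonneg b)]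

theorem stmt_3_general (β j : ℝ → ℝ) (hβ : Monotone β)
    (η R ε : ℝ) (hη : 0 < η) (hε : 0 < ε)
    (hε1 : ε ≤ 1) (hεη : ε * η ≤ 1)
    (hcoer : ∀ r : ℝ, R ≤ |r| → β r * r ≥ η * r ^ 2)
    (hres : ∀ r : ℝ, j r + ε * β (j r) = r) :
    ∀ r : ℝ, R + |β R| + |β (-R)| ≤ |r| →
      (r - j r) / ε * r ≥ η / 2 * r ^ 2 := by
  intro r hr
  have hyosida : (r - j r) / ε = β (j r) := by
    rw [div_eq_iff hε.ne']
    linarith [hres r]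
  have hjR : R ≤ |j r| := le_abs_of_le_abs_add_mul hβ hε.le hε1 (by rwa [hres r])
  have key := half_coercive_add_mul hη.le hε.le hεη (hcoer _ hjR)
  rwa [hres r, ← hyosida] at key

/-- Estimate (3.8) of the paper (convex case): the quadratic coercivity of a
monotone function `β` (with `β 0 = 0`) for large arguments transfers to its
Yosida regularization `β_ε(r) = (r - j(r))/ε` (where `j` is a resolvent, i.e.
`j r + ε * β (j r) = r`), uniformly for small `ε`, with constant halved and a
slightly enlarged threshold. -/
theorem stmt_3 (β j : ℝ → ℝ) (hβ : Monotone β) (hβ0 : β 0 = 0)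
    (η R ε : ℝ) (hη : 0 < η) (hR : 0 ≤ R) (hε : 0 < ε)
    (hε1 : ε ≤ 1) (hεη : ε * η ≤ 1)
    (hcoer : ∀ r : ℝ, R ≤ |r| → β r * r ≥ η * r ^ 2)
    (hres : ∀ r : ℝ, j r + ε * β (j r) = r) :
    ∀ r : ℝ, R + |β R| + |β (-R)| ≤ |r| →
      (r - j r) / ε * r ≥ η / 2 * r ^ 2 :=
  stmt_3_general β j hβ η R ε hη hε hε1 hεη hcoer hres
end

section
/- Let H be a real inner product space and let c, K₀, K₁ ≥ 0. Then there exists c' ≥ 0, depending only on c, K₀ and K₁, with the following property: for every N ∈ ℕ and all finite sequences v⁰, v¹, …, v^N and z⁰, z¹, …, z^N in H such that ‖v⁰‖ ≤ K₀, ‖z⁰‖ + Σ_{i=1}^{N} ‖zⁱ − z^{i−1}‖ ≤ K₁, and ‖v^m‖² ≤ c + c·Σ_{i=1}^{m} ⟨zⁱ, vⁱ − v^{i−1}⟩ for every m = 1, …, N, one has ‖v^m‖ ≤ c' for every m = 0, 1, …, N. -/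
/-!
Let `x = ‖vᵐ‖` be the largest of the `‖vⁱ‖`, `i ≤ N`. If `m = 0` then `x ≤ K₀`. Otherwise summation by
parts moves the differences from `v` onto `z`,
`∑ ⟪zⁱ, vⁱ - vⁱ⁻¹⟫ = ⟪zᵐ, vᵐ⟫ - ⟪z⁰, v⁰⟫ - ∑ ⟪zⁱ - zⁱ⁻¹, vⁱ⁻¹⟫`,
and each term is controlled by the total variation of `z` times `x`, giving `x² ≤ a + b x` with
`a = c + c K₁ K₀` and `b = 2 c K₁`, whence `x ≤ b + √a`.
-/

open Finset

lemma le_add_sqrt_of_sq_le_add_mul {a b x : ℝ} (hb : 0 ≤ b) (h : x ^ 2 ≤ a + b * x) :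
    x ≤ b + √a := by
  rcases le_or_gt x b with hxb | hbx
  · linarith [Real.sqrt_nonneg a]
  · have : (x - b) ^ 2 ≤ a := by nlinarith
    linarith [Real.le_sqrt_of_sq_le this]

lemma norm_le_norm_zero_add_sum_norm_sub {F : Type*} [SeminormedAddGroup F] (z : ℕ → F) (m : ℕ) :
    ‖z m‖ ≤ ‖z 0‖ + ∑ i ∈ Icc 1 m, ‖z i - z (i - 1)‖ := by
  induction m with
  | zero => simp
  | succ m ih =>
    rw [sum_Icc_succ_top (by omega), Nat.add_sub_cancel]
    linarith [norm_le_norm_add_norm_sub' (z (m + 1)) (z m)]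

section InnerProduct

variable {E : Type*} [NormedAddCommGroup E] [InnerProductSpace ℝ E] (v z : ℕ → E)

lemma sum_Icc_inner_by_parts (m : ℕ) :
    ∑ i ∈ Icc 1 m, (inner ℝ (z i) (v i - v (i - 1)) : ℝ) =
      inner ℝ (z m) (v m) - inner ℝ (z 0) (v 0) -
        ∑ i ∈ Icc 1 m, (inner ℝ (z i - z (i - 1)) (v (i - 1)) : ℝ) := by
  induction m with
  | zero => simp
  | succ m ih =>
    rw [sum_Icc_succ_top (by omega), sum_Icc_succ_top (by omega), ih, Nat.add_sub_cancel]
    simp only [inner_sub_left, inner_sub_right]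
    ring

lemma sum_Icc_inner_sub_le {m : ℕ} {M : ℝ} (hM : ∀ i ≤ m, ‖v i‖ ≤ M) :
    ∑ i ∈ Icc 1 m, (inner ℝ (z i) (v i - v (i - 1)) : ℝ) ≤
      (‖z 0‖ + 2 * ∑ i ∈ Icc 1 m, ‖z i - z (i - 1)‖) * M + ‖z 0‖ * ‖v 0‖ := by
  have hM0 : 0 ≤ M := (norm_nonneg _).trans (hM 0 m.zero_le)
  have h_last : (inner ℝ (z m) (v m) : ℝ) ≤ (‖z 0‖ + ∑ i ∈ Icc 1 m, ‖z i - z (i - 1)‖) * M :=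
    (real_inner_le_norm _ _).trans <| mul_le_mul (norm_le_norm_zero_add_sum_norm_sub z m)
      (hM m le_rfl) (norm_nonneg _) (by positivity)
  have h_first : -(inner ℝ (z 0) (v 0) : ℝ) ≤ ‖z 0‖ * ‖v 0‖ :=
    (neg_le_abs _).trans (abs_real_inner_le_norm _ _)
  have h_diff : -∑ i ∈ Icc 1 m, (inner ℝ (z i - z (i - 1)) (v (i - 1)) : ℝ) ≤
      (∑ i ∈ Icc 1 m, ‖z i - z (i - 1)‖) * M := by
    rw [← sum_neg_distrib, sum_mul]
    refine sum_le_sum fun i hi => ?_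
    exact (neg_le_abs _).trans <| (abs_real_inner_le_norm _ _).trans <|
      mul_le_mul_of_nonneg_left (hM _ (by grind)) (norm_nonneg _)
  rw [sum_Icc_inner_by_parts]
  linarith

end InnerProduct

theorem stmt_4_general {H : Type*} [NormedAddCommGroup H] [InnerProductSpace ℝ H]
    (c K₀ K₁ : ℝ) (hc : 0 ≤ c) (hK₁ : 0 ≤ K₁) :
    ∃ c' : ℝ, 0 ≤ c' ∧ ∀ (N : ℕ) (v z : ℕ → H),
      ‖v 0‖ ≤ K₀ →
      ‖z 0‖ + ∑ i ∈ Finset.Icc 1 N, ‖z i - z (i - 1)‖ ≤ K₁ →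
      (∀ m : ℕ, 1 ≤ m → m ≤ N →
        ‖v m‖ ^ 2 ≤ c + c * ∑ i ∈ Finset.Icc 1 m, (inner ℝ (z i) (v i - v (i - 1)) : ℝ)) →
      ∀ m : ℕ, m ≤ N → ‖v m‖ ≤ c' := by
  refine ⟨max K₀ (2 * c * K₁ + √(c + c * K₁ * K₀)), le_max_of_le_right (by positivity), ?_⟩
  intro N v z hv₀ hz hv m hm
  obtain ⟨k, hk, hmax⟩ := (range (N + 1)).exists_max_image (fun i => ‖v i‖) nonempty_range_add_one
  simp only [mem_range, Nat.lt_succ_iff] at hk hmax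
  refine (hmax m hm).trans ?_
  rcases Nat.eq_zero_or_pos k with rfl | hk₁
  · exact le_max_of_le_left hv₀
  have h_var : ∑ i ∈ Icc 1 k, ‖z i - z (i - 1)‖ ≤ ∑ i ∈ Icc 1 N, ‖z i - z (i - 1)‖ :=
    sum_le_sum_of_subset_of_nonneg (Icc_subset_Icc_right hk) fun _ _ _ => norm_nonneg _
  have h_sum : ∑ i ∈ Icc 1 k, (inner ℝ (z i) (v i - v (i - 1)) : ℝ) ≤
      2 * K₁ * ‖v k‖ + K₁ * K₀ := by
    refine (sum_Icc_inner_sub_le v z fun i hi => hmax i (hi.trans hk)).trans ?_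
    gcongr
    · linarith [norm_nonneg (z 0)]
    · linarith [norm_nonneg (z 0), sum_nonneg fun i (_ : i ∈ Icc 1 N) => norm_nonneg (z i - z (i - 1))]
  refine le_max_of_le_right (le_add_sqrt_of_sq_le_add_mul (by positivity) ?_)
  nlinarith [hv k hk₁ hk]

/-- Discrete Gronwall-type lemma (Section 3 of the paper, after (3.22)): a
finite sequence in an inner product space whose squared norms are controlled by
discrete duality products against a sequence of bounded total variation is
itself bounded, uniformly in the number `N` of steps. -/
theorem stmt_4 {H : Type*} [NormedAddCommGroup H] [InnerProductSpace ℝ H]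
    (c K₀ K₁ : ℝ) (hc : 0 ≤ c) (hK₀ : 0 ≤ K₀) (hK₁ : 0 ≤ K₁) :
    ∃ c' : ℝ, 0 ≤ c' ∧ ∀ (N : ℕ) (v z : ℕ → H),
      ‖v 0‖ ≤ K₀ →
      ‖z 0‖ + ∑ i ∈ Finset.Icc 1 N, ‖z i - z (i - 1)‖ ≤ K₁ →
      (∀ m : ℕ, 1 ≤ m → m ≤ N →
        ‖v m‖ ^ 2 ≤ c + c * ∑ i ∈ Finset.Icc 1 m, (inner ℝ (z i) (v i - v (i - 1)) : ℝ)) →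
      ∀ m : ℕ, m ≤ N → ‖v m‖ ≤ c' :=
  stmt_4_general c K₀ K₁ hc hK₁
end

section
/- Let d ≥ 1 and let Ω ⊆ ℝ^d be open, bounded and nonempty, satisfying the interior density condition with constants c_Ω > 0, ρ₀ > 0. Let ν ∈ (0, 1], δ ≥ 0, and let u : closure(Ω) → ℝ be (δ, ν)-Hölder. Let r̄ ∈ ℝ and assume u(x) ≤ r̄ for all x ∈ closure(Ω) and u(x) < r̄ for Lebesgue-almost every x ∈ Ω. Let κ > 0 with 2κν ≥ d, let r₁ < r̄ and c_β > 0, and let w : Ω → ℝ be a measurable function with ∫_Ω w(x)² dx < ∞ such that, for almost every x ∈ Ω with r₁ ≤ u(x) < r̄, one has w(x) ≥ c_β/(r̄ − u(x))^κ. Then u(x) < r̄ for every x ∈ closure(Ω). -/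
open MeasureTheory

/-- A set `Ω ⊆ ℝ^d` satisfies the interior density condition with constants
`cΩ > 0`, `ρ₀ > 0` if for every `x` in the closure of `Ω` and every radius
`r ∈ (0, ρ₀]`, the Lebesgue measure of `Ω ∩ B(x, r)` is at least `cΩ·r^d`. -/
def InteriorDensityCondition {d : ℕ} (Ω : Set (EuclideanSpace ℝ (Fin d)))
    (cΩ ρ₀ : ℝ) : Prop :=
  ∀ x ∈ closure Ω, ∀ r : ℝ, 0 < r → r ≤ ρ₀ →
    ENNReal.ofReal (cΩ * r ^ d) ≤ volume (Ω ∩ Metric.ball x r)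

/-- Pointwise separation statement at the core of Proposition 2.5 of the paper:
a `(δ, ν)`-Hölder function dominated by the barrier `rbar` whose associated
singular nonlinearity `cβ/(rbar - u)^κ` is square-integrable, with the
compatibility `2κν ≥ d`, never attains the barrier value `rbar`. -/
theorem stmt_8 (d : ℕ) (hd : 1 ≤ d) (Ω : Set (EuclideanSpace ℝ (Fin d)))
    (hΩopen : IsOpen Ω) (hΩbdd : Bornology.IsBounded Ω) (hΩne : Ω.Nonempty)
    (cΩ ρ₀ : ℝ) (hcΩ : 0 < cΩ) (hρ₀ : 0 < ρ₀)
    (hdens : InteriorDensityCondition Ω cΩ ρ₀)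
    (ν δ : ℝ) (hν : 0 < ν) (hν1 : ν ≤ 1) (hδ : 0 ≤ δ)
    (u : EuclideanSpace ℝ (Fin d) → ℝ)
    (hHol : ∀ x ∈ closure Ω, ∀ y ∈ closure Ω, |u x - u y| ≤ δ * ‖x - y‖ ^ ν)
    (rbar : ℝ) (hle : ∀ x ∈ closure Ω, u x ≤ rbar)
    (hae : ∀ᵐ x ∂(volume.restrict Ω), u x < rbar)
    (κ : ℝ) (hκ : 0 < κ) (hκν : 2 * κ * ν ≥ (d : ℝ))
    (r₁ : ℝ) (hr₁ : r₁ < rbar) (cβ : ℝ) (hcβ : 0 < cβ)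
    (w : EuclideanSpace ℝ (Fin d) → ℝ) (hw : Measurable w)
    (hwL2 : IntegrableOn (fun x => w x ^ 2) Ω volume)
    (hsing : ∀ᵐ x ∂(volume.restrict Ω),
      r₁ ≤ u x → u x < rbar → w x ≥ cβ / (rbar - u x) ^ κ) :
    ∀ x ∈ closure Ω, u x < rbar := by
  by_contra hcon
  push_neg at hcon
  obtain ⟨x₀, hx₀, hx₀ge⟩ := hcon
  have hx₀eq : u x₀ = rbar := le_antisymm (hle x₀ hx₀) hx₀ge
  -- dispose of the degenerate case δ = 0
  rcases eq_or_lt_of_le hδ with hδ0 | hδpos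
  · -- u is constant equal to rbar on the closure, contradicting the a.e. strict bound
    have hconst : ∀ x ∈ closure Ω, u x = rbar := by
      intro x hx
      have h := hHol x₀ hx₀ x hx
      rw [← hδ0, zero_mul] at h
      have : u x₀ = u x := by
        have := abs_nonneg (u x₀ - u x)
        have : |u x₀ - u x| = 0 := le_antisymm h this
        linarith [abs_eq_zero.mp this, sub_eq_zero.mp (abs_eq_zero.mp this)]
      rw [← this, hx₀eq]
    have hfalse : ∀ᵐ x ∂(volume.restrict Ω), False := by
      filter_upwards [hae, ae_restrict_mem hΩopen.measurableSet] with x h1 h2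
      exact absurd (hconst x (subset_closure h2)) (ne_of_lt h1)
    have h0 : volume Ω = 0 := by
      have := ae_iff.mp hfalse
      simpa [Measure.restrict_apply_univ] using this
    exact absurd h0 (hΩopen.measure_pos volume hΩne).ne'
  -- main case: δ > 0
  -- choose the base radius r₀
  set r₃ : ℝ := ((rbar - r₁) / δ) ^ (1 / ν) with hr₃def
  have hr₃pos : 0 < r₃ := Real.rpow_pos_of_pos (div_pos (by linarith) hδpos) _
  have hr₃key : δ * r₃ ^ ν = rbar - r₁ := by
    rw [hr₃def, ← Real.rpow_mul (le_of_lt (div_pos (by linarith) hδpos)),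
      one_div, inv_mul_cancel₀ hν.ne', Real.rpow_one]
    field_simp
  set r₀ : ℝ := min 1 (min ρ₀ r₃) with hr₀def
  have hr₀pos : 0 < r₀ := lt_min one_pos (lt_min hρ₀ hr₃pos)
  have hr₀le1 : r₀ ≤ 1 := min_le_left _ _
  have hr₀leρ : r₀ ≤ ρ₀ := (min_le_right _ _).trans (min_le_left _ _)
  have hr₀ler₃ : r₀ ≤ r₃ := (min_le_right _ _).trans (min_le_right _ _)
  -- the constant lower bound
  set C : ℝ := cΩ * (cβ ^ 2 / δ ^ (2 * κ)) with hCdef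
  have hCpos : 0 < C := by
    apply mul_pos hcΩ
    exact div_pos (pow_pos hcβ 2) (Real.rpow_pos_of_pos hδpos _)
  -- per-radius lower bound
  have key : ∀ r : ℝ, 0 < r → r ≤ r₀ →
      C ≤ ∫ x in Ω ∩ Metric.ball x₀ r, w x ^ 2 := by
    intro r hr hrr₀
    set S := Ω ∩ Metric.ball x₀ r with hSdef
    have hSmeas : MeasurableSet S :=
      (hΩopen.inter Metric.isOpen_ball).measurableSet
    have hSsub : S ⊆ Ω := Set.inter_subset_left
    have hSfin : volume S < ⊤ :=
      lt_of_le_of_lt (measure_mono hSsub) hΩbdd.measure_lt_top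
    have hr1 : r ≤ 1 := hrr₀.trans hr₀le1
    set m : ℝ := cβ / (δ * r ^ ν) ^ κ with hmdef
    have hδrν : 0 < δ * r ^ ν := mul_pos hδpos (Real.rpow_pos_of_pos hr _)
    have hmpos : 0 < m := div_pos hcβ (Real.rpow_pos_of_pos hδrν _)
    -- pointwise a.e. bound on S
    have haeS : ∀ᵐ x ∂(volume.restrict S), m ^ 2 ≤ w x ^ 2 := by
      filter_upwards [ae_restrict_of_ae_restrict_of_subset hSsub hae,
        ae_restrict_of_ae_restrict_of_subset hSsub hsing,
        ae_restrict_mem hSmeas] with x h1 h2 h3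
      have hxΩ : x ∈ Ω := h3.1
      have hxball : dist x x₀ < r := Metric.mem_ball.mp h3.2
      have hxcl : x ∈ closure Ω := subset_closure hxΩ
      have hup : rbar - u x ≤ δ * r ^ ν := by
        have hh := hHol x₀ hx₀ x hxcl
        have heq : |u x₀ - u x| = rbar - u x := by
          rw [hx₀eq, abs_of_nonneg (by linarith [hle x hxcl])]
        rw [heq] at hh
        refine hh.trans ?_
        have hnorm : ‖x₀ - x‖ ≤ r := by
          rw [← dist_eq_norm, dist_comm]
          exact hxball.le
        exact mul_le_mul_of_nonneg_left
          (Real.rpow_le_rpow (norm_nonneg _) hnorm hν.le) hδ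
      have hur₁ : r₁ ≤ u x := by
        have h2' : δ * r ^ ν ≤ δ * r₃ ^ ν := by
          apply mul_le_mul_of_nonneg_left _ hδ
          exact Real.rpow_le_rpow hr.le (hrr₀.trans hr₀ler₃) hν.le
        have := hr₃key
        linarith
      have hw1 : cβ / (rbar - u x) ^ κ ≤ w x := h2 hur₁ h1
      have hgap : 0 < rbar - u x := by linarith
      have hmw : m ≤ w x := by
        refine le_trans ?_ hw1
        rw [hmdef]
        exact div_le_div_of_nonneg_left hcβ.le (Real.rpow_pos_of_pos hgap _)
          (Real.rpow_le_rpow hgap.le hup hκ.le)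
      exact pow_le_pow_left₀ hmpos.le hmw 2
    -- lower bound on the measure
    have hvol : cΩ * r ^ d ≤ (volume S).toReal := by
      have h1 := hdens x₀ hx₀ r hr (hrr₀.trans hr₀leρ)
      have h2 : (ENNReal.ofReal (cΩ * r ^ d)).toReal ≤ (volume S).toReal :=
        ENNReal.toReal_mono hSfin.ne h1
      rwa [ENNReal.toReal_ofReal (by positivity)] at h2
    -- integrability facts
    have hIconst : IntegrableOn (fun _ => m ^ 2) S volume :=
      integrableOn_const hSfin.ne
    have hIw : IntegrableOn (fun x => w x ^ 2) S volume := hwL2.mono_set hSsub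
    -- the arithmetic lower bound: C ≤ m² · cΩ · rᵈ
    have harith : C ≤ m ^ 2 * (cΩ * r ^ d) := by
      have hkey : (δ * r ^ ν) ^ κ = δ ^ κ * r ^ (ν * κ) := by
        rw [Real.mul_rpow hδ (Real.rpow_nonneg hr.le _),
          ← Real.rpow_mul hr.le]
      have hm2 : m ^ 2 = cβ ^ 2 / (δ ^ (2 * κ) * r ^ (2 * (ν * κ))) := by
        rw [hmdef, div_pow, hkey, mul_pow]
        congr 1
        rw [← Real.rpow_natCast (δ ^ κ) 2, ← Real.rpow_natCast (r ^ (ν * κ)) 2,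
          ← Real.rpow_mul hδ, ← Real.rpow_mul hr.le]
        norm_num
        ring_nf
      have hrd : r ^ (2 * (ν * κ)) ≤ r ^ ((d : ℝ)) := by
        apply Real.rpow_le_rpow_of_exponent_ge hr hr1
        rw [show 2 * (ν * κ) = 2 * κ * ν by ring]
        exact hκν
      have hrdeq : (r : ℝ) ^ d = r ^ ((d : ℝ)) := (Real.rpow_natCast r d).symm
      have hpos1 : 0 < r ^ (2 * (ν * κ)) := Real.rpow_pos_of_pos hr _
      have hquot : 1 ≤ r ^ ((d : ℝ)) / r ^ (2 * (ν * κ)) :=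
        (one_le_div hpos1).mpr hrd
      have heq : m ^ 2 * (cΩ * r ^ d)
          = C * (r ^ ((d : ℝ)) / r ^ (2 * (ν * κ))) := by
        rw [hm2, hrdeq, hCdef]
        field_simp
      rw [heq]
      calc C = C * 1 := (mul_one C).symm
        _ ≤ C * (r ^ ((d : ℝ)) / r ^ (2 * (ν * κ))) :=
          mul_le_mul_of_nonneg_left hquot hCpos.le
    calc C ≤ m ^ 2 * (cΩ * r ^ d) := harith
      _ ≤ m ^ 2 * (volume S).toReal :=
          mul_le_mul_of_nonneg_left hvol (by positivity)
      _ = ∫ _ in S, m ^ 2 := by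
          rw [setIntegral_const, smul_eq_mul, mul_comm, measureReal_def]
      _ ≤ ∫ x in S, w x ^ 2 := setIntegral_mono_ae_restrict hIconst hIw haeS
  -- shrinking sequence of sets
  set s : ℕ → Set (EuclideanSpace ℝ (Fin d)) :=
    fun n => Ω ∩ Metric.ball x₀ (r₀ / (n + 1)) with hsdef
  have hsm : ∀ n, MeasurableSet (s n) := fun n =>
    (hΩopen.inter Metric.isOpen_ball).measurableSet
  have hanti : Antitone s := by
    intro n m hnm
    apply Set.inter_subset_inter_right
    apply Metric.ball_subset_ball
    apply div_le_div_of_nonneg_left hr₀pos.le (by positivity)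
    exact_mod_cast by exact_mod_cast add_le_add_left (Nat.cast_le.mpr hnm) 1
  have hfi : ∃ n, IntegrableOn (fun x => w x ^ 2) (s n) volume :=
    ⟨0, hwL2.mono_set Set.inter_subset_left⟩
  have htend := tendsto_setIntegral_of_antitone hsm hanti hfi
  have hinter : (⋂ n, s n) ⊆ {x₀} := by
    intro y hy
    simp only [Set.mem_iInter] at hy
    have : ∀ n : ℕ, dist y x₀ < r₀ / (n + 1) := fun n => (hy n).2
    have hdist : dist y x₀ ≤ 0 := by
      by_contra hd
      push_neg at hd
      obtain ⟨n, hn⟩ := exists_nat_gt (r₀ / dist y x₀)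
      have hn' : r₀ / (n + 1) < dist y x₀ := by
        rw [div_lt_iff₀ (by positivity)]
        rw [div_lt_iff₀ hd] at hn
        nlinarith
      exact absurd (this n) (not_lt.mpr hn'.le)
    have : dist y x₀ = 0 := le_antisymm hdist dist_nonneg
    simpa [Set.mem_singleton_iff] using dist_eq_zero.mp this
  haveI : Nonempty (Fin d) := ⟨⟨0, hd⟩⟩
  haveI : Nontrivial (EuclideanSpace ℝ (Fin d)) := inferInstance
  have hzero : (∫ x in ⋂ n, s n, w x ^ 2) = 0 := by
    have : volume (⋂ n, s n) = 0 :=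
      le_antisymm ((measure_mono hinter).trans (measure_singleton x₀).le) (zero_le)
    rw [Measure.restrict_eq_zero.mpr this, integral_zero_measure]
  rw [hzero] at htend
  have hC0 : C ≤ 0 := by
    apply ge_of_tendsto htend
    filter_upwards with n
    apply key
    · positivity
    · rw [div_le_iff₀ (by positivity)]
      nlinarith [hr₀pos, Nat.cast_nonneg (α := ℝ) n]
  exact absurd hC0 (not_le.mpr hCpos)
end

section
/- Let d ≥ 1 and let Ω ⊆ ℝ^d be open, bounded and nonempty, satisfying the interior density condition with constants c_Ω > 0, ρ₀ > 0. Let ν ∈ (0, 1], δ ≥ 0, r̄ ∈ ℝ, κ > 0 with 2κν ≥ d, r₁ < r̄, c_β > 0 and M ≥ 0. Then there exists r̄* < r̄, depending only on d, Ω, c_Ω, ρ₀, ν, δ, r̄, κ, r₁, c_β and M, such that: whenever u : closure(Ω) → ℝ is (δ, ν)-Hölder with u(x) ≤ r̄ for all x ∈ closure(Ω) and u(x) < r̄ for almost every x ∈ Ω, and there exists a measurable w : Ω → ℝ with ∫_Ω w(x)² dx ≤ M satisfying w(x) ≥ c_β/(r̄ − u(x))^κ for almost every x ∈ Ω with r₁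 ≤ u(x) < r̄, then u(x) ≤ r̄* for every x ∈ closure(Ω). -/
open MeasureTheory

/-- Auxiliary algebraic estimate: the per-annulus lower bound is uniform in the
scale `s ≤ r` thanks to the compatibility condition `d ≤ 2κν`. -/
lemma stmt_9_aux (d : ℕ) (s r δ' cβ κ ν : ℝ) (hs : 0 < s) (hsr : s ≤ r)
    (hδ' : 0 < δ') (hκ : 0 < κ) (hν : 0 < ν) (hdle : (d : ℝ) ≤ 2 * κ * ν) :
    r ^ ((d : ℝ) - 2 * κ * ν) * (cβ / (2 * δ') ^ κ) ^ 2 ≤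
      s ^ d * (cβ / (2 * δ' * s ^ ν) ^ κ) ^ 2 := by
  have hr : 0 < r := lt_of_lt_of_le hs hsr
  have hsν : (0:ℝ) < s ^ ν := Real.rpow_pos_of_pos hs ν
  have e1 : (2 * δ' * s ^ ν) ^ κ = (2 * δ') ^ κ * (s ^ ν) ^ κ :=
    Real.mul_rpow (by positivity) hsν.le
  have e2 : (s ^ ν) ^ κ = s ^ (ν * κ) := (Real.rpow_mul hs.le ν κ).symm
  have e3 : (s:ℝ) ^ (d:ℕ) / (s ^ (ν * κ)) ^ 2 = s ^ ((d : ℝ) - 2 * κ * ν) := by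
    rw [sq, ← Real.rpow_add hs, ← Real.rpow_natCast s d, ← Real.rpow_sub hs]
    congr 1
    ring
  have hA : ((2 * δ' : ℝ) ^ κ) ≠ 0 := (Real.rpow_pos_of_pos (by positivity) κ).ne'
  have hB : (s ^ (ν * κ)) ≠ 0 := (Real.rpow_pos_of_pos hs _).ne'
  have key2 : s ^ d * (cβ / ((2 * δ') ^ κ * s ^ (ν * κ))) ^ 2 =
      (s ^ (d:ℕ) / (s ^ (ν * κ)) ^ 2) * (cβ / (2 * δ') ^ κ) ^ 2 := by
    field_simp
  calc r ^ ((d : ℝ) - 2 * κ * ν) * (cβ / (2 * δ') ^ κ) ^ 2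
      ≤ s ^ ((d : ℝ) - 2 * κ * ν) * (cβ / (2 * δ') ^ κ) ^ 2 := by
        apply mul_le_mul_of_nonneg_right _ (sq_nonneg _)
        exact Real.rpow_le_rpow_of_nonpos hs hsr (by linarith)
    _ = s ^ d * (cβ / (2 * δ' * s ^ ν) ^ κ) ^ 2 := by
        rw [e1, e2, key2, e3]

set_option maxHeartbeats 1000000

/-- Uniform separation property (2.22) of Proposition 2.5 of the paper: the
distance to the barrier `rbar` is bounded below uniformly over all `(δ, ν)`-Hölder
functions dominated by `rbar` whose associated singular nonlinearity
`cβ/(rbar - u)^κ` admits a square-integrable pointwise bound `w` with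
`∫ w² ≤ M`, under the compatibility `2κν ≥ d`. -/
theorem stmt_9 (d : ℕ) (hd : 1 ≤ d) (Ω : Set (EuclideanSpace ℝ (Fin d)))
    (hΩopen : IsOpen Ω) (hΩbdd : Bornology.IsBounded Ω) (hΩne : Ω.Nonempty)
    (cΩ ρ₀ : ℝ) (hcΩ : 0 < cΩ) (hρ₀ : 0 < ρ₀)
    (hdens : InteriorDensityCondition Ω cΩ ρ₀)
    (ν δ : ℝ) (hν : 0 < ν) (hν1 : ν ≤ 1) (hδ : 0 ≤ δ)
    (rbar : ℝ) (κ : ℝ) (hκ : 0 < κ) (hκν : 2 * κ * ν ≥ (d : ℝ))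
    (r₁ : ℝ) (hr₁ : r₁ < rbar) (cβ : ℝ) (hcβ : 0 < cβ) (M : ℝ) (hM : 0 ≤ M) :
    ∃ rstar : ℝ, rstar < rbar ∧
      ∀ u : EuclideanSpace ℝ (Fin d) → ℝ,
        (∀ x ∈ closure Ω, ∀ y ∈ closure Ω, |u x - u y| ≤ δ * ‖x - y‖ ^ ν) →
        (∀ x ∈ closure Ω, u x ≤ rbar) →
        (∀ᵐ x ∂(volume.restrict Ω), u x < rbar) →
        (∃ w : EuclideanSpace ℝ (Fin d) → ℝ, Measurable w ∧
          IntegrableOn (fun x => w x ^ 2) Ω volume ∧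
          (∫ x in Ω, w x ^ 2) ≤ M ∧
          (∀ᵐ x ∂(volume.restrict Ω),
            r₁ ≤ u x → u x < rbar → w x ≥ cβ / (rbar - u x) ^ κ)) →
        ∀ x ∈ closure Ω, u x ≤ rstar := by
  classical
  haveI : Nontrivial (EuclideanSpace ℝ (Fin d)) := by
    have : 0 < Module.finrank ℝ (EuclideanSpace ℝ (Fin d)) := by
      rw [finrank_euclideanSpace_fin]; omega
    exact Module.nontrivial_of_finrank_pos this
  -- modified Hölder constant
  set δ' : ℝ := δ + 1 with hδ'def
  have hδ' : (0:ℝ) < δ' := by simp only [hδ'def]; linarith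
  -- volume of the unit ball
  set ωR : ℝ := (volume (Metric.ball (0 : EuclideanSpace ℝ (Fin d)) 1)).toReal with hωRdef
  have hω_top : volume (Metric.ball (0 : EuclideanSpace ℝ (Fin d)) 1) ≠ ⊤ :=
    measure_ball_lt_top.ne
  have hωR : 0 < ωR :=
    ENNReal.toReal_pos (Metric.measure_ball_pos _ _ one_pos).ne' hω_top
  -- the ratio between consecutive scales
  set lam : ℝ := min (1/2) ((cΩ / (2 * ωR)) ^ ((1:ℝ)/d)) with hlamdef
  have hlam0 : 0 < lam :=
    lt_min (by norm_num) (Real.rpow_pos_of_pos (by positivity) _)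
  have hlam1 : lam ≤ 1/2 := min_le_left _ _
  have hlamd : ωR * lam ^ d ≤ cΩ / 2 := by
    have hdne : ((d:ℝ)) ≠ 0 := Nat.cast_ne_zero.mpr (by omega)
    have hb : ((cΩ / (2 * ωR)) ^ ((1:ℝ)/d)) ^ d = cΩ / (2 * ωR) := by
      rw [← Real.rpow_natCast ((cΩ / (2 * ωR)) ^ ((1:ℝ)/d)) d,
        ← Real.rpow_mul (by positivity), one_div, inv_mul_cancel₀ hdne, Real.rpow_one]
    have hle : lam ^ d ≤ cΩ / (2 * ωR) := by
      rw [← hb]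
      exact pow_le_pow_left₀ hlam0.le (min_le_right _ _) d
    have := mul_le_mul_of_nonneg_left hle hωR.le
    calc ωR * lam ^ d ≤ ωR * (cΩ / (2 * ωR)) := this
      _ = cΩ / 2 := by field_simp
  -- the largest scale
  set r : ℝ := min ρ₀ (((rbar - r₁) / (2 * δ')) ^ ((1:ℝ)/ν)) with hrdef
  have hgapr : (0:ℝ) < rbar - r₁ := by linarith
  have hr0 : 0 < r :=
    lt_min hρ₀ (Real.rpow_pos_of_pos (div_pos hgapr (by positivity)) _)
  have hrρ : r ≤ ρ₀ := min_le_left _ _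
  have hrν : δ' * r ^ ν ≤ (rbar - r₁) / 2 := by
    have hb : (((rbar - r₁) / (2 * δ')) ^ ((1:ℝ)/ν)) ^ ν = (rbar - r₁) / (2 * δ') := by
      rw [← Real.rpow_mul (div_nonneg hgapr.le (by positivity)), one_div, inv_mul_cancel₀ hν.ne', Real.rpow_one]
    have hle : r ^ ν ≤ (rbar - r₁) / (2 * δ') := by
      rw [← hb]
      exact Real.rpow_le_rpow hr0.le (min_le_right _ _) hν.le
    have := mul_le_mul_of_nonneg_left hle hδ'.le
    calc δ' * r ^ ν ≤ δ' * ((rbar - r₁) / (2 * δ')) := this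
      _ = (rbar - r₁) / 2 := by field_simp
  -- the uniform per-annulus constant
  set C : ℝ := cΩ / 2 * r ^ ((d:ℝ) - 2 * κ * ν) * (cβ / (2 * δ') ^ κ) ^ 2 with hCdef
  have hC : 0 < C := by
    have h1 : (0:ℝ) < r ^ ((d:ℝ) - 2 * κ * ν) := Real.rpow_pos_of_pos hr0 _
    have h2 : (0:ℝ) < cβ / (2 * δ') ^ κ := by
      exact div_pos hcβ (Real.rpow_pos_of_pos (by positivity) κ)
    positivity
  -- the number of annuli
  set N : ℕ := ⌈M / C⌉₊ + 1 with hNdef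
  have hN1 : 1 ≤ N := Nat.le_add_left 1 _
  have hNC : M < N * C := by
    have h1 : M / C ≤ (⌈M / C⌉₊ : ℝ) := Nat.le_ceil _
    have h2 : M / C < (N : ℝ) := by
      rw [hNdef]; push_cast; linarith
    calc M = M / C * C := by field_simp
      _ < N * C := by exact mul_lt_mul_of_pos_right h2 hC
  -- the separation constant
  set ε₀ : ℝ := min ((rbar - r₁) / 2) (δ' * (lam ^ (N - 1) * r) ^ ν) with hε₀def
  have hε₀ : 0 < ε₀ := by
    apply lt_min (by linarith)
    have : (0:ℝ) < lam ^ (N - 1) * r := by positivity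
    exact mul_pos hδ' (Real.rpow_pos_of_pos this ν)
  refine ⟨rbar - ε₀, by linarith, ?_⟩
  rintro u hu hub hae ⟨w, hwm, hwint, hwM, hwlb⟩ x₀ hx₀
  by_contra hcon
  push_neg at hcon
  set ε : ℝ := rbar - u x₀ with hεdef
  have hε0 : 0 ≤ ε := sub_nonneg.mpr (hub x₀ hx₀)
  have hεε₀ : ε < ε₀ := by simp only [hεdef]; linarith
  -- the scales
  set s : ℕ → ℝ := fun k => lam ^ k * r with hsdef
  have hs0 : ∀ k, 0 < s k := fun k => by
    simp only [hsdef]; positivity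
  have hsr : ∀ k, s k ≤ r := fun k => by
    simp only [hsdef]
    have h1 : lam ^ k ≤ 1 := pow_le_one₀ hlam0.le (by linarith)
    nlinarith
  -- the annuli
  set A : ℕ → Set (EuclideanSpace ℝ (Fin d)) :=
    fun k => (Ω ∩ Metric.ball x₀ (s k)) \ Metric.ball x₀ (lam * s k) with hAdef
  have hAΩ : ∀ k, A k ⊆ Ω := fun k =>
    (Set.diff_subset).trans Set.inter_subset_left
  have hAball : ∀ k, A k ⊆ Metric.ball x₀ (s k) := fun k =>
    (Set.diff_subset).trans Set.inter_subset_right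
  have hAmeas : ∀ k, MeasurableSet (A k) := fun k =>
    ((hΩopen.measurableSet.inter measurableSet_ball).diff measurableSet_ball)
  have hAfin : ∀ k, volume (A k) < ⊤ := fun k =>
    lt_of_le_of_lt (measure_mono (hAball k)) measure_ball_lt_top
  have hAint : ∀ k, IntegrableOn (fun x => w x ^ 2) (A k) volume := fun k =>
    hwint.mono_set (hAΩ k)
  -- disjointness
  have hAdisj : (↑(Finset.range N) : Set ℕ).Pairwise (Function.onFun Disjoint A) := by
    have key : ∀ j k : ℕ, j < k → Disjoint (A j) (A k) := by
      intro j k hjk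
      rw [Set.disjoint_left]
      intro x hxj hxk
      have h1 : x ∉ Metric.ball x₀ (lam * s j) := hxj.2
      have h2 : x ∈ Metric.ball x₀ (s k) := hAball k hxk
      apply h1
      apply Metric.ball_subset_ball _ h2
      simp only [hsdef]
      have : lam ^ k ≤ lam ^ (j + 1) := pow_le_pow_of_le_one hlam0.le (by linarith) hjk
      calc lam ^ k * r ≤ lam ^ (j+1) * r := by nlinarith
        _ = lam * (lam ^ j * r) := by ring
    intro j _ k _ hjk
    rcases lt_or_gt_of_ne hjk with h | h
    · exact key j k h
    · exact (key k j h).symm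
  -- volume lower bound on annuli
  have hAvol : ∀ k, cΩ / 2 * (s k) ^ d ≤ (volume (A k)).toReal := by
    intro k
    have hdens' := hdens x₀ hx₀ (s k) (hs0 k) (le_trans (hsr k) hrρ)
    have hball : volume (Metric.ball x₀ (lam * s k)) ≤
        ENNReal.ofReal (cΩ / 2 * (s k) ^ d) := by
      rw [Measure.addHaar_ball volume x₀ (by positivity : (0:ℝ) ≤ lam * s k),
        finrank_euclideanSpace_fin,
        show volume (Metric.ball (0 : EuclideanSpace ℝ (Fin d)) 1) = ENNReal.ofReal ωR from
          (ENNReal.ofReal_toReal hω_top).symm,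
        ← ENNReal.ofReal_mul (by positivity)]
      apply ENNReal.ofReal_le_ofReal
      have h1 : (lam * s k) ^ d = lam ^ d * (s k) ^ d := mul_pow _ _ _
      have h2 : (0:ℝ) ≤ (s k) ^ d := by positivity
      nlinarith
    have hlow : ENNReal.ofReal (cΩ / 2 * (s k) ^ d) ≤ volume (A k) := by
      have h1 : ENNReal.ofReal (cΩ * (s k) ^ d) - ENNReal.ofReal (cΩ / 2 * (s k) ^ d) ≤
          volume (Ω ∩ Metric.ball x₀ (s k)) - volume (Metric.ball x₀ (lam * s k)) :=
        tsub_le_tsub hdens' hball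
      have h2 := le_measure_diff (μ := volume) (s₁ := Ω ∩ Metric.ball x₀ (s k))
        (s₂ := Metric.ball x₀ (lam * s k))
      rw [← ENNReal.ofReal_sub _ (by positivity)] at h1
      have heq : cΩ * (s k) ^ d - cΩ / 2 * (s k) ^ d = cΩ / 2 * (s k) ^ d := by ring
      rw [heq] at h1
      exact le_trans h1 h2
    have := ENNReal.toReal_mono (hAfin k).ne hlow
    rwa [ENNReal.toReal_ofReal (by positivity)] at this
  -- the key per-annulus integral bound
  have key : ∀ k, k < N → C ≤ ∫ x in A k, w x ^ 2 := by
    intro k hk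
    set ck : ℝ := (cβ / (2 * δ' * (s k) ^ ν) ^ κ) ^ 2 with hckdef
    have hck0 : 0 ≤ ck := sq_nonneg _
    -- a.e. pointwise bound on the annulus
    have hptwise : ∀ᵐ x ∂(volume.restrict (A k)), ck ≤ w x ^ 2 := by
      have h1 := ae_restrict_of_ae_restrict_of_subset (hAΩ k) hae
      have h2 := ae_restrict_of_ae_restrict_of_subset (hAΩ k) hwlb
      have h3 := ae_restrict_mem (μ := volume) (hAmeas k)
      filter_upwards [h1, h2, h3] with x hx1 hx2 hx3
      obtain ⟨⟨hxΩ, hxB⟩, _⟩ := hx3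
      have hdist : ‖x - x₀‖ ≤ s k := by
        have := Metric.mem_ball.mp hxB
        rw [dist_eq_norm] at this
        exact this.le
      have hd1 : ‖x - x₀‖ ^ ν ≤ (s k) ^ ν :=
        Real.rpow_le_rpow (norm_nonneg _) hdist hν.le
      have htpos : 0 < δ' * (s k) ^ ν :=
        mul_pos hδ' (Real.rpow_pos_of_pos (hs0 k) ν)
      have hHol : |u x - u x₀| ≤ δ' * (s k) ^ ν := by
        calc |u x - u x₀| ≤ δ * ‖x - x₀‖ ^ ν := hu x (subset_closure hxΩ) x₀ hx₀
          _ ≤ δ' * (s k) ^ ν := by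
              apply mul_le_mul (by simp only [hδ'def]; linarith) hd1
                (Real.rpow_nonneg (norm_nonneg _) ν) hδ'.le
      have habs := abs_le.mp hHol
      have hsν : δ' * (s k) ^ ν ≤ (rbar - r₁) / 2 := by
        have h1 : (s k) ^ ν ≤ r ^ ν := Real.rpow_le_rpow (hs0 k).le (hsr k) hν.le
        nlinarith
      have hεs : ε ≤ δ' * (s k) ^ ν := by
        have hkN : k ≤ N - 1 := by omega
        have hsk : lam ^ (N - 1) ≤ lam ^ k := pow_le_pow_of_le_one hlam0.le (by linarith) hkN
        have hsk2 : s (N - 1) ≤ s k := by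
          simp only [hsdef]; nlinarith
        have hν2 : (s (N - 1)) ^ ν ≤ (s k) ^ ν :=
          Real.rpow_le_rpow (hs0 _).le hsk2 hν.le
        have hε₀2 : ε₀ ≤ δ' * (s (N - 1)) ^ ν := min_le_right _ _
        nlinarith
      have hεhalf : ε ≤ (rbar - r₁) / 2 := le_trans hεε₀.le (min_le_left _ _)
      have hux_lo : r₁ ≤ u x := by
        have h5 : u x₀ - u x ≤ δ' * (s k) ^ ν := by linarith [habs.1]
        have h6 : rbar - u x₀ ≤ (rbar - r₁) / 2 := by
          have := hεε₀.le.trans (min_le_left ((rbar - r₁) / 2) (δ' * (lam ^ (N - 1) * r) ^ ν))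
          simpa [hεdef] using this
        have h7 : u x₀ - u x ≤ (rbar - r₁) / 2 := le_trans h5 hsν
        linarith [h6, h7]
      have hux_hi : u x < rbar := hx1
      have hw := hx2 hux_lo hux_hi
      have hgap : rbar - u x ≤ 2 * δ' * (s k) ^ ν := by
        have : u x₀ - u x ≤ δ' * (s k) ^ ν := by linarith [habs.1]
        simp only [hεdef] at hεs
        linarith
      have hgap0 : 0 < rbar - u x := by linarith
      have hpow : (rbar - u x) ^ κ ≤ (2 * δ' * (s k) ^ ν) ^ κ :=
        Real.rpow_le_rpow hgap0.le hgap hκ.le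
      have hpow0 : 0 < (rbar - u x) ^ κ := Real.rpow_pos_of_pos hgap0 κ
      have hlb : cβ / (2 * δ' * (s k) ^ ν) ^ κ ≤ w x := by
        calc cβ / (2 * δ' * (s k) ^ ν) ^ κ ≤ cβ / (rbar - u x) ^ κ :=
              div_le_div_of_nonneg_left hcβ.le hpow0 hpow
          _ ≤ w x := hw
      have hlb0 : 0 ≤ cβ / (2 * δ' * (s k) ^ ν) ^ κ := by positivity
      calc ck = (cβ / (2 * δ' * (s k) ^ ν) ^ κ) ^ 2 := rfl
        _ ≤ w x ^ 2 := pow_le_pow_left₀ hlb0 hlb 2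
    -- integrate the pointwise bound
    have hconst : Integrable (fun _ => ck) (volume.restrict (A k)) :=
      (integrableOn_const_iff (C := ck)).mpr (Or.inr (hAfin k))
    have hint := integral_mono_ae hconst (hAint k) hptwise
    rw [setIntegral_const, smul_eq_mul] at hint
    have hvol := hAvol k
    calc C = cΩ / 2 * r ^ ((d:ℝ) - 2 * κ * ν) * (cβ / (2 * δ') ^ κ) ^ 2 := rfl
      _ ≤ cΩ / 2 * ((s k) ^ d * (cβ / (2 * δ' * (s k) ^ ν) ^ κ) ^ 2) := by
          have := stmt_9_aux d (s k) r δ' cβ κ ν (hs0 k) (hsr k) hδ' hκ hν hκν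
          calc cΩ / 2 * r ^ ((d:ℝ) - 2 * κ * ν) * (cβ / (2 * δ') ^ κ) ^ 2
              = cΩ / 2 * (r ^ ((d:ℝ) - 2 * κ * ν) * (cβ / (2 * δ') ^ κ) ^ 2) := by ring
            _ ≤ _ := by
                apply mul_le_mul_of_nonneg_left this (by linarith)
      _ = (cΩ / 2 * (s k) ^ d) * ck := by rw [hckdef]; ring
      _ ≤ (volume (A k)).toReal * ck := mul_le_mul_of_nonneg_right hvol hck0
      _ ≤ ∫ x in A k, w x ^ 2 := hint
  -- assemble the contradiction
  have hUsub : (⋃ k ∈ Finset.range N, A k) ⊆ Ω := by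
    intro x hx
    simp only [Set.mem_iUnion] at hx
    obtain ⟨k, _, hk⟩ := hx
    exact hAΩ k hk
  have h3 : ∫ x in ⋃ k ∈ Finset.range N, A k, w x ^ 2 ≤ ∫ x in Ω, w x ^ 2 :=
    setIntegral_mono_set hwint (Filter.Eventually.of_forall fun x => sq_nonneg _)
      (HasSubset.Subset.eventuallyLE hUsub)
  have h1 : ∫ x in ⋃ k ∈ Finset.range N, A k, w x ^ 2 =
      ∑ k ∈ Finset.range N, ∫ x in A k, w x ^ 2 :=
    integral_biUnion_finset (Finset.range N) (fun i _ => hAmeas i) hAdisj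
      (fun i _ => hAint i)
  have h2 : (N : ℝ) * C ≤ ∑ k ∈ Finset.range N, ∫ x in A k, w x ^ 2 := by
    have := Finset.card_nsmul_le_sum (Finset.range N) (fun k => ∫ x in A k, w x ^ 2) C
      (fun k hk => key k (Finset.mem_range.mp hk))
    simpa [nsmul_eq_mul, Finset.card_range] using this
  linarith
end

section
/- Let H be a real inner product space, T > 0, σ > 0 and c ≥ 0. Let w : ℝ → H and Q : ℝ → ℝ be continuously differentiable on [0, T], with w(0) = 0, Q(0) = 0, Q(t) ≥ 0 for all t ∈ [0, T], and suppose that σ·‖w'(t)‖² + Q'(t) ≤ c·‖w(t)‖² for every t ∈ [0, T]. Then w(t) = 0 for every t ∈ [0, T]. -/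
open Set MeasureTheory intervalIntegral Filter

/-- Abstract Gronwall-type mechanism of the uniqueness proof of Theorem 2.6 of
the paper: if `w(0) = 0`, `Q(0) = 0`, `Q ≥ 0`, and
`σ‖w'(t)‖² + Q'(t) ≤ c‖w(t)‖²` on `[0, T]`, then `w ≡ 0` on `[0, T]`. -/
theorem stmt_10 {H : Type*} [NormedAddCommGroup H] [InnerProductSpace ℝ H]
    (T σ c : ℝ) (hT : 0 < T) (hσ : 0 < σ) (hc : 0 ≤ c)
    (w w' : ℝ → H) (Q Q' : ℝ → ℝ)
    (hw : ∀ t ∈ Set.Icc (0 : ℝ) T, HasDerivWithinAt w (w' t) (Set.Icc 0 T) t)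
    (hw' : ContinuousOn w' (Set.Icc 0 T))
    (hQ : ∀ t ∈ Set.Icc (0 : ℝ) T, HasDerivWithinAt Q (Q' t) (Set.Icc 0 T) t)
    (hQ' : ContinuousOn Q' (Set.Icc 0 T))
    (hw0 : w 0 = 0) (hQ0 : Q 0 = 0)
    (hQpos : ∀ t ∈ Set.Icc (0 : ℝ) T, 0 ≤ Q t)
    (hineq : ∀ t ∈ Set.Icc (0 : ℝ) T, σ * ‖w' t‖ ^ 2 + Q' t ≤ c * ‖w t‖ ^ 2) :
    ∀ t ∈ Set.Icc (0 : ℝ) T, w t = 0 := by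
  -- continuity facts
  have hwc : ContinuousOn w (Icc 0 T) := fun s hs => (hw s hs).continuousWithinAt
  have hQc : ContinuousOn Q (Icc 0 T) := fun s hs => (hQ s hs).continuousWithinAt
  have hEcont : ContinuousOn (fun s => ‖w s‖ ^ 2) (Icc 0 T) := (hwc.norm).pow 2
  have hE'cont : ContinuousOn (fun s => ‖w' s‖ ^ 2) (Icc 0 T) := (hw'.norm).pow 2
  -- interval integrability helper
  have intInt : ∀ (f : ℝ → ℝ), ContinuousOn f (Icc 0 T) → ∀ t ∈ Icc (0:ℝ) T,
      IntervalIntegrable f volume 0 t := by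
    intro f hf t ht
    apply ContinuousOn.intervalIntegrable
    rw [uIcc_of_le ht.1]
    exact hf.mono (Icc_subset_Icc le_rfl ht.2)
  -- Icc 0 T is a right-neighborhood of x within Ioi x for x ∈ [0, T)
  have hmemIoi : ∀ x ∈ Ico (0:ℝ) T, Icc (0:ℝ) T ∈ nhdsWithin x (Ioi x) := by
    intro x hx
    exact Filter.mem_of_superset (Ioc_mem_nhdsGT_of_mem ⟨le_rfl, hx.2⟩)
      (fun z hz => ⟨hx.1.trans hz.1.le, hz.2⟩)
  have hmemIci : ∀ x ∈ Ico (0:ℝ) T, Icc (0:ℝ) T ∈ nhdsWithin x (Ici x) := by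
    intro x hx
    exact Filter.mem_of_superset (Icc_mem_nhdsGE_of_mem ⟨le_rfl, hx.2⟩)
      (fun z hz => ⟨hx.1.trans hz.1, hz.2⟩)
  -- abbreviations
  set A : ℝ → ℝ := fun t => ∫ s in (0:ℝ)..t, ‖w' s‖ ^ 2 with hA
  set B : ℝ → ℝ := fun t => ∫ s in (0:ℝ)..t, ‖w s‖ ^ 2 with hB
  have hBnonneg : ∀ t ∈ Icc (0:ℝ) T, 0 ≤ B t := by
    intro t ht
    exact intervalIntegral.integral_nonneg ht.1 (fun s _ => by positivity)
  -- Step 1: σ * A t ≤ c * B t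
  have key1 : ∀ t ∈ Icc (0:ℝ) T, σ * A t ≤ c * B t := by
    intro t ht
    have hsub : Icc (0:ℝ) t ⊆ Icc 0 T := Icc_subset_Icc le_rfl ht.2
    have hQint : ∫ s in (0:ℝ)..t, Q' s = Q t - Q 0 := by
      apply intervalIntegral.integral_eq_sub_of_hasDeriv_right_of_le ht.1
        (hQc.mono hsub)
      · intro x hx
        exact (hQ x ⟨hx.1.le, hx.2.le.trans ht.2⟩).mono_of_mem_nhdsWithin
          (hmemIoi x ⟨hx.1.le, hx.2.trans_le ht.2⟩)
      · exact intInt Q' hQ' t ht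
    have hmono : ∫ s in (0:ℝ)..t, (σ * ‖w' s‖ ^ 2 + Q' s)
        ≤ ∫ s in (0:ℝ)..t, c * ‖w s‖ ^ 2 := by
      apply intervalIntegral.integral_mono_on ht.1
      · exact ((intInt _ hE'cont t ht).const_mul σ).add (intInt Q' hQ' t ht)
      · exact (intInt _ hEcont t ht).const_mul c
      · intro x hx
        exact hineq x (hsub hx)
    rw [intervalIntegral.integral_add ((intInt _ hE'cont t ht).const_mul σ)
        (intInt Q' hQ' t ht), intervalIntegral.integral_const_mul, hQint,
        intervalIntegral.integral_const_mul] at hmono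
    have hQt : 0 ≤ Q t := hQpos t ht
    rw [hQ0] at hmono
    simp only [hA, hB]
    linarith
  -- Step 2: ‖w t‖ ^ 2 ≤ A t + B t
  have key2 : ∀ t ∈ Icc (0:ℝ) T, ‖w t‖ ^ 2 ≤ A t + B t := by
    intro t ht
    have hsub : Icc (0:ℝ) t ⊆ Icc 0 T := Icc_subset_Icc le_rfl ht.2
    have hEderiv : ∀ x ∈ Icc (0:ℝ) T, HasDerivWithinAt (fun s => ‖w s‖ ^ 2)
        (2 * inner ℝ (w' x) (w x)) (Icc 0 T) x := by
      intro x hx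
      have h := (hw x hx).inner ℝ (hw x hx)
      simp only [real_inner_self_eq_norm_sq] at h
      refine h.congr_deriv ?_
      rw [real_inner_comm (w x) (w' x)]
      ring
    have hDcont : ContinuousOn (fun s => 2 * inner ℝ (w' s) (w s) : ℝ → ℝ) (Icc 0 T) := by
      exact continuousOn_const.mul (hw'.inner hwc)
    have hEint : ∫ s in (0:ℝ)..t, 2 * inner ℝ (w' s) (w s) = ‖w t‖ ^ 2 - ‖w 0‖ ^ 2 := by
      apply intervalIntegral.integral_eq_sub_of_hasDeriv_right_of_le ht.1
        (hEcont.mono hsub)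
      · intro x hx
        exact (hEderiv x ⟨hx.1.le, hx.2.le.trans ht.2⟩).mono_of_mem_nhdsWithin
          (hmemIoi x ⟨hx.1.le, hx.2.trans_le ht.2⟩)
      · exact intInt _ hDcont t ht
    have hmono : ∫ s in (0:ℝ)..t, (2 * inner ℝ (w' s) (w s) : ℝ)
        ≤ ∫ s in (0:ℝ)..t, (‖w' s‖ ^ 2 + ‖w s‖ ^ 2) := by
      apply intervalIntegral.integral_mono_on ht.1 (intInt _ hDcont t ht)
        ((intInt _ hE'cont t ht).add (intInt _ hEcont t ht))
      intro x _
      have h1 : (inner ℝ (w' x) (w x) : ℝ) ≤ ‖w' x‖ * ‖w x‖ := real_inner_le_norm _ _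
      nlinarith [sq_nonneg (‖w' x‖ - ‖w x‖)]
    rw [hEint, hw0] at hmono
    rw [intervalIntegral.integral_add (intInt _ hE'cont t ht) (intInt _ hEcont t ht)] at hmono
    simp only [norm_zero, ne_eq, OfNat.ofNat_ne_zero, not_false_eq_true, zero_pow,
      sub_zero] at hmono
    simpa only [hA, hB] using hmono
  -- combine: ‖w t‖ ^ 2 ≤ (1 + c / σ) * B t
  have key3 : ∀ t ∈ Icc (0:ℝ) T, ‖w t‖ ^ 2 ≤ (1 + c / σ) * B t := by
    intro t ht
    have h1 := key1 t ht
    have h2 := key2 t ht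
    have hb := hBnonneg t ht
    have h5 : σ * ((1 + c / σ) * B t) = σ * B t + c * B t := by
      field_simp
    have h6 : σ * ‖w t‖ ^ 2 ≤ σ * ((1 + c / σ) * B t) := by
      have h7 := mul_le_mul_of_nonneg_left h2 hσ.le
      rw [h5]; nlinarith
    exact le_of_mul_le_mul_left h6 hσ
  -- B is continuous and has right derivative ‖w x‖² on [0, T)
  have hBcont : ContinuousOn B (Icc 0 T) := by
    have := intervalIntegral.continuousOn_primitive_interval
      (a := (0:ℝ)) (b := T) (f := fun s => ‖w s‖ ^ 2) (μ := volume) ?_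
    · simpa [hB, uIcc_of_le hT.le] using this
    · rw [uIcc_of_le hT.le]
      exact hEcont.integrableOn_Icc
  have hBderiv : ∀ x ∈ Ico (0:ℝ) T, HasDerivWithinAt B (‖w x‖ ^ 2) (Ici x) x := by
    intro x hx
    apply intervalIntegral.integral_hasDerivWithinAt_right
      (intInt _ hEcont x ⟨hx.1, hx.2.le⟩) (t := Ioi x)
    · exact ⟨Icc 0 T, hmemIoi x hx,
        (hEcont.aestronglyMeasurable measurableSet_Icc)⟩
    · exact (hEcont x ⟨hx.1, hx.2.le⟩).mono_of_mem_nhdsWithin (hmemIoi x hx)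
  -- Gronwall
  have hBle : ∀ t ∈ Icc (0:ℝ) T, B t ≤ 0 := by
    have hg := le_gronwallBound_of_liminf_deriv_right_le (f := B)
      (f' := fun x => ‖w x‖ ^ 2) (δ := 0) (K := 1 + c / σ) (ε := 0) (a := 0) (b := T)
      hBcont ?_ ?_ ?_
    · intro t ht
      simpa [gronwallBound_ε0_δ0] using hg t ht
    · intro x hx r hr
      refine ((hBderiv x hx).liminf_right_slope_le hr).mono ?_
      intro z hz
      rwa [slope_def_field, div_eq_inv_mul] at hz
    · simp [hB]
    · intro x hx
      have := key3 x ⟨hx.1, hx.2.le⟩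
      linarith
  -- conclude
  intro t ht
  have h1 := key3 t ht
  have h2 := hBle t ht
  have hK : 0 ≤ 1 + c / σ := by positivity
  have : ‖w t‖ ^ 2 ≤ 0 := h1.trans (mul_nonpos_of_nonneg_of_nonpos hK h2)
  have : ‖w t‖ = 0 := by nlinarith [sq_nonneg ‖w t‖, norm_nonneg (w t)]
  simpa using this
end
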